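/- arXiv:1806.00493 — 2 statements merged into one kernel-verified Lean document; each statement's English description precedes it below -/
import Mathlib

section
/- For any integer t ≥ 3 there exists n₀ such that every (n,d,λ)-graph G with n ≥ n₀ and λ ≤ d^{t−1}/(20t·4^{t−2}·n^{t−2}) satisfies: if G' is a graph on V(G) with maximum degree at most (d/(4n))^{t−2}·d/(20t), then for every vertex v of G there exists a family of at least d/(2t−2) copies of K_t in G∖G', all containing v and pairwise intersecting exactly in {v}. -/
/-
The expander mixing lemma, applied to the indicator vector of a vertex set `U`, gives
`e(U) ≥ d|U|²/n - λ|U|`. Removing the at most `Δ|U|` pairs of `G'` (`Δ` its maximum degree),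
some vertex of `U` has at least `d|U|/n - λ - Δ` neighbours in `U` in `G ∖ G'`. Starting from a
set of size `d/(20t)` and passing `t - 2` times to such a neighbourhood, the sizes
`(d/(4n))^j · d/(20t)` stay above `λ + Δ`, which yields a copy of `K_{t-1}` inside any set of
`d/(20t)` vertices. Copies of `K_t` through `v` are then chosen greedily: as long as fewer than
`d/(2t-2)` have been chosen, they cover at most `3d/4` vertices, so the remaining
`G ∖ G'`-neighbourhood of `v` still has `d/(20t)` vertices and contains a `K_{t-1}` disjoint
from all previous copies.
-/

open Finset

namespace NDL

variable {V : Type*} [Fintype V] [DecidableEq V]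

/-- Number of ordered pairs `(a,b) ∈ A × B` with `ab` an edge (edges inside `A ∩ B`
are counted twice). -/
def epairs (G : SimpleGraph V) [DecidableRel G.Adj] (A B : Finset V) : ℕ :=
  ((A ×ˢ B).filter fun p => G.Adj p.1 p.2).card

/-- `G` is an `(n,d,λ)`-graph: an `n`-vertex `d`-regular graph whose adjacency matrix has
one eigenvalue equal to `d` and all remaining eigenvalues at most `lam` in absolute value. -/
def IsNDL {n : ℕ} (G : SimpleGraph (Fin n)) [DecidableRel G.Adj] (d : ℕ) (lam : ℝ) : Prop :=
  G.IsRegularOfDegree d ∧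
  ∃ (hA : Matrix.IsHermitian (G.adjMatrix ℝ)) (i₀ : Fin n),
    hA.eigenvalues i₀ = d ∧ ∀ i, i ≠ i₀ → |hA.eigenvalues i| ≤ lam

/-- The copies of `K_t` of `G` lying inside the vertex set `U`. -/
def KtOn (G : SimpleGraph V) [DecidableRel G.Adj] (t : ℕ) (U : Finset V) :
    Finset (Finset V) :=
  (G.cliqueFinset t).filter (· ⊆ U)

/-- The value of a fractional `K_t`-matching in `G[U]`. -/
noncomputable def matchVal (G : SimpleGraph V) [DecidableRel G.Adj] (t : ℕ) (U : Finset V)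
    (f : Finset V → ℝ) : ℝ :=
  ∑ T ∈ KtOn G t U, f T

/-- `f` is a fractional `K_t`-matching of the weighted graph `(G[U], w)`. -/
def IsFracMatching (G : SimpleGraph V) [DecidableRel G.Adj] (t : ℕ) (w : V → V → ℝ)
    (U : Finset V) (f : Finset V → ℝ) : Prop :=
  (∀ T, 0 ≤ f T) ∧ (∀ T, T ∉ KtOn G t U → f T = 0) ∧
  (∀ v ∈ U, ∑ T ∈ (KtOn G t U).filter (v ∈ ·), f T ≤ 1) ∧
  (∀ u ∈ U, ∀ v ∈ U, G.Adj u v →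
    ∑ T ∈ (KtOn G t U).filter (fun T => u ∈ T ∧ v ∈ T), f T ≤ w u v)

/-- `f` is a fractional `K_t`-factor of the weighted graph `(G, w)`. -/
def IsFracFactor (G : SimpleGraph V) [DecidableRel G.Adj] (t : ℕ) (w : V → V → ℝ)
    (f : Finset V → ℝ) : Prop :=
  IsFracMatching G t w Finset.univ f ∧
  ∀ v, ∑ T ∈ (KtOn G t Finset.univ).filter (v ∈ ·), f T = 1

/-- `∑_{uv ∈ binom(U,2)} h(uv)` for a symmetric function `h`. -/
noncomputable def pairSum (U : Finset V) (h : V → V → ℝ) : ℝ :=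
  (∑ u ∈ U, ∑ v ∈ U.erase u, h u v) / 2

/-- `∑_{uv ∈ E(G[U])} h(uv) * w(uv)` for symmetric functions `h`, `w`. -/
noncomputable def edgeWSum (G : SimpleGraph V) [DecidableRel G.Adj] (U : Finset V)
    (h w : V → V → ℝ) : ℝ :=
  (∑ u ∈ U, ∑ v ∈ (U.erase u).filter (G.Adj u), h u v * w u v) / 2

/-- Property `P(t, D, D', n)` of a graph `H`. -/
def PropertyP (H : SimpleGraph V) [DecidableRel H.Adj] (t D : ℕ) (D' : ℝ) (n : ℕ) : Prop :=
  ∀ U : Finset V, (n : ℝ) - D ≤ U.card →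
    ∀ U₀ ⊆ U, (U₀.card : ℝ) = (D : ℝ) / t →
      ∃ F : Finset (Finset V),
        D' / ((t : ℝ) - 1) ≤ F.card ∧
        (∀ T ∈ F, H.IsNClique t T ∧ T ⊆ U ∧ (T ∩ U₀).card = 1) ∧
        (∀ T ∈ F, ∀ T' ∈ F, T ≠ T' → T ∩ T' ⊆ U₀)

end NDL

open Matrix

namespace OrthonormalBasis
variable {ι n : Type*} [Fintype ι] [Fintype n]

lemma sum_dotProduct_smul (b : OrthonormalBasis ι ℝ (EuclideanSpace ℝ n)) (x : n → ℝ) :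
    ∑ i, (x ⬝ᵥ ⇑(b i)) • ⇑(b i) = x := by
  have h := congrArg WithLp.ofLp (b.sum_repr' (WithLp.toLp 2 x))
  simpa [EuclideanSpace.inner_eq_star_dotProduct] using h

lemma dotProduct_eq_sum (b : OrthonormalBasis ι ℝ (EuclideanSpace ℝ n)) (x y : n → ℝ) :
    x ⬝ᵥ y = ∑ i, (x ⬝ᵥ ⇑(b i)) * (y ⬝ᵥ ⇑(b i)) := by
  conv_lhs => rw [← b.sum_dotProduct_smul y]
  simp only [dotProduct_sum, dotProduct_smul, smul_eq_mul, mul_comm]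

lemma sq_dotProduct_eq_of_dotProduct_eq_zero [DecidableEq ι]
    (b : OrthonormalBasis ι ℝ (EuclideanSpace ℝ n)) {i₀ : ι} {v : n → ℝ}
    (hv : ∀ i ≠ i₀, v ⬝ᵥ ⇑(b i) = 0) (x : n → ℝ) :
    (x ⬝ᵥ v) ^ 2 = (x ⬝ᵥ ⇑(b i₀)) ^ 2 * (v ⬝ᵥ v) := by
  have hsingle : ∀ y : n → ℝ, y ⬝ᵥ v = (y ⬝ᵥ ⇑(b i₀)) * (v ⬝ᵥ ⇑(b i₀)) := fun y => by
    rw [b.dotProduct_eq_sum, sum_eq_single i₀ (fun i _ hi => by rw [hv i hi, mul_zero])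
      (by simp)]
  rw [hsingle, hsingle v]
  ring

end OrthonormalBasis

namespace Matrix.IsHermitian
variable {n : Type*} [Fintype n] [DecidableEq n] {A : Matrix n n ℝ} (hA : A.IsHermitian)

lemma dotProduct_mulVec_self_eq_sum (x : n → ℝ) :
    x ⬝ᵥ A *ᵥ x = ∑ i, hA.eigenvalues i * (x ⬝ᵥ ⇑(hA.eigenvectorBasis i)) ^ 2 := by
  conv_lhs => enter [2, 2]; rw [← hA.eigenvectorBasis.sum_dotProduct_smul x]
  simp only [mulVec_sum, mulVec_smul, hA.mulVec_eigenvectorBasis, dotProduct_sum,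
    dotProduct_smul, smul_eq_mul]
  exact sum_congr rfl fun i _ => by ring

lemma dotProduct_eigenvectorBasis_eq_zero {a : ℝ} {v : n → ℝ} (hv : A *ᵥ v = a • v) {i : n}
    (hi : hA.eigenvalues i ≠ a) : v ⬝ᵥ ⇑(hA.eigenvectorBasis i) = 0 := by
  have hT : Aᵀ = A := by simpa [conjTranspose_eq_transpose_of_trivial] using hA.eq
  have h : hA.eigenvalues i * (v ⬝ᵥ hA.eigenvectorBasis i) = a * (v ⬝ᵥ hA.eigenvectorBasis i) := by
    rw [← smul_eq_mul, ← dotProduct_smul, ← hA.mulVec_eigenvectorBasis, dotProduct_mulVec,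
      ← mulVec_transpose, hT, hv, smul_dotProduct, smul_eq_mul]
  by_contra hc
  exact hi (mul_right_cancel₀ hc h)

end Matrix.IsHermitian

namespace SimpleGraph

variable {V : Type*} [DecidableEq V]

def IsNCliqueSunflower (H : SimpleGraph V) (s : ℕ) (v : V) (F : Finset (Finset V)) : Prop :=
  (∀ T ∈ F, H.IsNClique s T ∧ v ∈ T) ∧ ∀ T ∈ F, ∀ T' ∈ F, T ≠ T' → T ∩ T' = {v}

variable (H : SimpleGraph V) [DecidableRel H.Adj]

theorem exists_isNClique_subset_of_forall_exists_adj {m : ℕ → ℝ} {k : ℕ} (hm : ∀ j, 0 < m j)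
    (hstep : ∀ j < k, ∀ U : Finset V, m j ≤ #U → ∃ u ∈ U, m (j + 1) ≤ #{w ∈ U | H.Adj u w}) :
    ∀ s j, j + s ≤ k + 1 → ∀ U : Finset V, m j ≤ #U → ∃ T ⊆ U, H.IsNClique s T := by
  intro s
  induction s with
  | zero => exact fun _ _ U _ => ⟨∅, U.empty_subset, isNClique_zero.2 rfl⟩
  | succ s ih =>
    intro j hjs U hU
    rcases s.eq_zero_or_pos with rfl | hs
    · obtain ⟨u, hu⟩ : U.Nonempty := card_pos.1 (by exact_mod_cast (hm j).trans_le hU)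
      exact ⟨{u}, singleton_subset_iff.2 hu, isNClique_singleton.2 rfl⟩
    obtain ⟨u, hu, hW⟩ := hstep j (by omega) U hU
    obtain ⟨T, hTW, hT⟩ := ih (j + 1) (by omega) _ hW
    refine ⟨insert u T, insert_subset hu (hTW.trans (filter_subset _ _)), hT.insert ?_⟩
    exact fun w hw => (mem_filter.1 (hTW hw)).2

variable [Fintype V] {H}

theorem IsNCliqueSunflower.insert_insert {s : ℕ} {v : V} {F : Finset (Finset V)}
    (hF : H.IsNCliqueSunflower (s + 1) v F) {K : Finset V}
    (hKv : K ⊆ H.neighborFinset v \ F.biUnion id) (hK : H.IsNClique s K) :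
    H.IsNCliqueSunflower (s + 1) v (insert (insert v K) F) := by
  have hfresh : ∀ T ∈ F, ∀ w ∈ K, w ∉ T := fun T hT w hw hwT =>
    (mem_sdiff.1 (hKv hw)).2 (mem_biUnion.2 ⟨T, hT, hwT⟩)
  have hmeet : ∀ T ∈ F, insert v K ∩ T = {v} := fun T hT => by
    ext w
    simp only [mem_inter, mem_insert, mem_singleton]
    constructor
    · rintro ⟨rfl | hw, hwT⟩
      · rfl
      · exact absurd hwT (hfresh T hT w hw)
    · rintro rfl
      exact ⟨Or.inl rfl, (hF.1 T hT).2⟩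
  refine ⟨?_, ?_⟩
  · simp only [mem_insert, forall_eq_or_imp]
    refine ⟨⟨hK.insert fun w hw => ?_, by simp⟩, hF.1⟩
    exact (mem_neighborFinset _ _ _).1 (mem_sdiff.1 (hKv hw)).1
  · simp only [mem_insert, forall_eq_or_imp]
    refine ⟨⟨fun h => absurd rfl h, fun T hT _ => hmeet T hT⟩, fun T hT => ⟨fun _ => ?_, hF.2 T hT⟩⟩
    rw [inter_comm, hmeet T hT]

theorem exists_isNCliqueSunflower_card_eq {s N : ℕ} (v : V) (hs : 0 < s)
    (hK : ∀ k < N, ∀ W : Finset V, #W ≤ k * (s + 1) →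
      ∃ K ⊆ H.neighborFinset v \ W, H.IsNClique s K) :
    ∃ F, #F = N ∧ H.IsNCliqueSunflower (s + 1) v F := by
  suffices ∀ k ≤ N, ∃ F, #F = k ∧ H.IsNCliqueSunflower (s + 1) v F from this N le_rfl
  intro k
  induction k with
  | zero => exact fun _ => ⟨∅, card_empty, by simp [IsNCliqueSunflower]⟩
  | succ k ih =>
    intro hk
    obtain ⟨F, rfl, hF⟩ := ih (by omega)
    have hW : #(F.biUnion id) ≤ #F * (s + 1) :=
      card_biUnion_le_card_mul _ _ _ fun T hT => (hF.1 T hT).1.card_eq.le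
    obtain ⟨K, hKv, hKc⟩ := hK _ hk _ hW
    obtain ⟨w, hw⟩ : K.Nonempty := card_pos.1 (hKc.card_eq ▸ hs)
    have hnew : insert v K ∉ F := fun hT =>
      (mem_sdiff.1 (hKv hw)).2 (mem_biUnion.2 ⟨_, hT, mem_insert_of_mem hw⟩)
    exact ⟨_, card_insert_of_notMem hnew, hF.insert_insert hKv hKc⟩

theorem degree_le_degree_sdiff_add_degree (G G' : SimpleGraph V) [DecidableRel G.Adj]
    [DecidableRel G'.Adj] (v : V) : G.degree v ≤ (G \ G').degree v + G'.degree v := by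
  simp only [← card_neighborFinset_eq_degree]
  refine (card_le_card fun w hw => ?_).trans (card_union_le _ _)
  simp only [mem_union, mem_neighborFinset, sdiff_adj] at hw ⊢
  tauto

end SimpleGraph

namespace NDL

lemma epairs_eq_sum_card_filter {V : Type*} [Fintype V] [DecidableEq V] (G : SimpleGraph V)
    [DecidableRel G.Adj] (A B : Finset V) : epairs G A B = ∑ a ∈ A, #{b ∈ B | G.Adj a b} := by
  simp only [epairs, card_filter, sum_product]

lemma epairs_le_sum_card_sdiff_add_sum_degree {V : Type*} [Fintype V] [DecidableEq V]
    (G G' : SimpleGraph V) [DecidableRel G.Adj] [DecidableRel G'.Adj] (U : Finset V) :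
    epairs G U U ≤ ∑ u ∈ U, #{w ∈ U | (G \ G').Adj u w} + ∑ u ∈ U, G'.degree u := by
  rw [epairs_eq_sum_card_filter, ← sum_add_distrib]
  refine sum_le_sum fun u _ => ?_
  rw [← SimpleGraph.card_neighborFinset_eq_degree]
  refine (card_le_card fun w hw => ?_).trans (card_union_le _ _)
  simp only [mem_union, mem_filter, SimpleGraph.mem_neighborFinset, SimpleGraph.sdiff_adj] at hw ⊢
  tauto

variable {n : ℕ} {G : SimpleGraph (Fin n)} [DecidableRel G.Adj] {d : ℕ} {lam : ℝ}

theorem IsNDL.dotProduct_adjMatrix_mulVec_ge (hG : IsNDL G d lam) (hlam : lam < d)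
    (x : Fin n → ℝ) :
    d * (∑ i, x i) ^ 2 / n - lam * (x ⬝ᵥ x - (∑ i, x i) ^ 2 / n) ≤
      x ⬝ᵥ G.adjMatrix ℝ *ᵥ x := by
  obtain ⟨hreg, hA, i₀, h₀, hi⟩ := hG
  set c : Fin n → ℝ := fun i => x ⬝ᵥ ⇑(hA.eigenvectorBasis i)
  have hn : (n : ℝ) ≠ 0 := by have := i₀.pos; positivity
  -- As `λ < d`, the all-ones vector, a `d`-eigenvector, is orthogonal to all other eigenvectors.
  have hone : ∀ i ≠ i₀, (1 : Fin n → ℝ) ⬝ᵥ ⇑(hA.eigenvectorBasis i) = 0 := fun i hi₀ =>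
    hA.dotProduct_eigenvectorBasis_eq_zero (a := d)
      (funext fun _ => by simpa using G.adjMatrix_mulVec_const_apply_of_regular (a := (1 : ℝ)) hreg)
      fun h => by linarith [le_abs_self (hA.eigenvalues i), hi i hi₀]
  have hc₀ : c i₀ ^ 2 = (∑ i, x i) ^ 2 / n := by
    have := hA.eigenvectorBasis.sq_dotProduct_eq_of_dotProduct_eq_zero hone x
    rw [dotProduct_one, one_dotProduct_one, Fintype.card_fin] at this
    field_simp
    exact this.symm
  have hrest : ∑ i ∈ univ.erase i₀, -lam * c i ^ 2 ≤
      ∑ i ∈ univ.erase i₀, hA.eigenvalues i * c i ^ 2 :=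
    sum_le_sum fun i hi' => mul_le_mul_of_nonneg_right
      (by linarith [neg_abs_le (hA.eigenvalues i), hi i (ne_of_mem_erase hi')]) (sq_nonneg _)
  have hquad : x ⬝ᵥ G.adjMatrix ℝ *ᵥ x =
      d * c i₀ ^ 2 + ∑ i ∈ univ.erase i₀, hA.eigenvalues i * c i ^ 2 := by
    rw [hA.dotProduct_mulVec_self_eq_sum, ← add_sum_erase _ _ (mem_univ i₀), h₀]
  have hnorm : x ⬝ᵥ x = c i₀ ^ 2 + ∑ i ∈ univ.erase i₀, c i ^ 2 := by
    simp only [hA.eigenvectorBasis.dotProduct_eq_sum x x, ← pow_two]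
    rw [← add_sum_erase _ _ (mem_univ i₀)]
  rw [← mul_sum] at hrest
  rw [hquad, hnorm, mul_div_assoc, ← hc₀]
  linarith

theorem IsNDL.le_epairs (hG : IsNDL G d lam) (hlam : lam < d) (U : Finset (Fin n)) :
    d * (#U : ℝ) ^ 2 / n - lam * (#U - (#U : ℝ) ^ 2 / n) ≤ epairs G U U := by
  set x : Fin n → ℝ := fun i => if i ∈ U then 1 else 0
  have hsum : ∑ i, x i = #U := by simp [x]
  have hnorm : x ⬝ᵥ x = #U := by simp [x, dotProduct]
  have hquad : x ⬝ᵥ G.adjMatrix ℝ *ᵥ x = epairs G U U := by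
    rw [SimpleGraph.dotProduct_mulVec_adjMatrix, epairs_eq_sum_card_filter, Nat.cast_sum,
      ← sum_subset (subset_univ U) fun i _ hi => by simp [x, hi]]
    refine sum_congr rfl fun i hi => ?_
    rw [card_filter, Nat.cast_sum, ← sum_subset (subset_univ U) fun j _ hj => by simp [x, hj]]
    refine sum_congr rfl fun j hj => ?_
    simp [x, hi, hj]
  have := hG.dotProduct_adjMatrix_mulVec_ge hlam x
  rwa [hsum, hnorm, hquad] at this

theorem IsNDL.exists_card_sdiff_adj_ge (hG : IsNDL G d lam) (hlam : lam < d) (hlam₀ : 0 ≤ lam)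
    {G' : SimpleGraph (Fin n)} [DecidableRel G'.Adj] {Δ : ℝ} (hG' : ∀ v, (G'.degree v : ℝ) ≤ Δ)
    {U : Finset (Fin n)} (hU : U.Nonempty) :
    ∃ u ∈ U, d * #U / n - lam - Δ ≤ #{w ∈ U | (G \ G').Adj u w} := by
  refine exists_le_of_sum_le hU ?_
  have hmix := hG.le_epairs hlam U
  have hdeg : ∑ u ∈ U, (G'.degree u : ℝ) ≤ #U * Δ := by
    simpa [sum_const, nsmul_eq_mul] using sum_le_sum fun u (_ : u ∈ U) => hG' u
  have hsplit : (epairs G U U : ℝ) ≤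
      ∑ u ∈ U, (#{w ∈ U | (G \ G').Adj u w} : ℝ) + ∑ u ∈ U, (G'.degree u : ℝ) := by
    exact_mod_cast epairs_le_sum_card_sdiff_add_sum_degree G G' U
  have : 0 ≤ lam * ((#U : ℝ) ^ 2 / n) := by positivity
  rw [sum_const, nsmul_eq_mul]
  linarith [show (#U : ℝ) * (d * #U / n - lam - Δ) = d * (#U : ℝ) ^ 2 / n - lam * #U - #U * Δ by
    ring]

theorem IsNDL.degree_lt (hG : IsNDL G d lam) : d < n := by
  obtain ⟨hreg, -, i₀, -⟩ := hG
  simpa [hreg i₀] using G.degree_lt_card_verts i₀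

theorem IsNDL.nonneg (hG : IsNDL G d lam) (hn : 1 < n) : 0 ≤ lam := by
  obtain ⟨-, hA, i₀, -, hi⟩ := hG
  obtain ⟨i, hi₀⟩ := Fintype.exists_ne_of_one_lt_card (by simpa using hn) i₀
  exact (abs_nonneg _).trans (hi i hi₀)

theorem IsNDL.exists_isNClique_sdiff (hG : IsNDL G d lam) (hd : 0 < d) {t : ℕ} (ht : 0 < t)
    {G' : SimpleGraph (Fin n)} [DecidableRel G'.Adj]
    (hlam : lam ≤ ((d : ℝ) / (4 * n)) ^ (t - 2) * (d / (20 * t)))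
    (hG' : ∀ v, (G'.degree v : ℝ) ≤ ((d : ℝ) / (4 * n)) ^ (t - 2) * (d / (20 * t)))
    {U : Finset (Fin n)} (hU : (d : ℝ) / (20 * t) ≤ #U) :
    ∃ K ⊆ U, (G \ G').IsNClique (t - 1) K := by
  set r : ℝ := d / (4 * n)
  set q : ℝ := d / (20 * t)
  have hdn : (d : ℝ) < n := by exact_mod_cast hG.degree_lt
  have hd' : (0 : ℝ) < d := by exact_mod_cast hd
  have hn : (0 : ℝ) < n := hd'.trans hdn
  have ht' : (0 : ℝ) < t := by exact_mod_cast ht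
  have hr₀ : 0 < r := by positivity
  have hr₁ : r ≤ 1 := (div_le_one (by positivity)).2 (by linarith)
  have hanti : ∀ {i j : ℕ}, i ≤ j → r ^ j * q ≤ r ^ i * q := fun hij =>
    mul_le_mul_of_nonneg_right (pow_le_pow_of_le_one hr₀.le hr₁ hij) (by positivity)
  have hq : q < d := div_lt_self hd' (by norm_cast; omega)
  have hlam_lt : lam < d := by linarith [hanti (Nat.zero_le (t - 2)), pow_zero r]
  have hlam₀ : 0 ≤ lam := hG.nonneg (by have := hG.degree_lt; omega)
  refine (G \ G').exists_isNClique_subset_of_forall_exists_adj (m := fun j => r ^ j * q)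
    (k := t - 2) (fun j => by positivity) (fun j hj W hW => ?_) (t - 1) 0 (by omega) U
    (by simpa using hU)
  have hW₀ : W.Nonempty :=
    card_pos.1 (by exact_mod_cast (by positivity : 0 < r ^ j * q).trans_le hW)
  obtain ⟨u, hu, hcard⟩ := hG.exists_card_sdiff_adj_ge hlam_lt hlam₀ hG' hW₀
  refine ⟨u, hu, le_trans ?_ hcard⟩
  have h4 : 4 * (r ^ (j + 1) * q) ≤ d * #W / n := by
    calc 4 * (r ^ (j + 1) * q) = 4 * r * (r ^ j * q) := by ring
      _ = d / n * (r ^ j * q) := by congr 1; simp only [r]; field_simp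
      _ ≤ d / n * #W := by gcongr
      _ = d * #W / n := by ring
  linarith [hanti (show j + 1 ≤ t - 2 by omega)]

theorem IsNDL.exists_isNClique_sdiff_neighborFinset (hG : IsNDL G d lam) (hd : 0 < d) {t : ℕ}
    (ht : 0 < t) {G' : SimpleGraph (Fin n)} [DecidableRel G'.Adj]
    (hlam : lam ≤ ((d : ℝ) / (4 * n)) ^ (t - 2) * (d / (20 * t)))
    (hG' : ∀ v, (G'.degree v : ℝ) ≤ ((d : ℝ) / (4 * n)) ^ (t - 2) * (d / (20 * t)))
    (v : Fin n) {W : Finset (Fin n)} (hW : (#W : ℝ) ≤ 3 * d / 4) :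
    ∃ K ⊆ (G \ G').neighborFinset v \ W, (G \ G').IsNClique (t - 1) K := by
  refine hG.exists_isNClique_sdiff hd ht hlam hG' ?_
  have hdn : (d : ℝ) < n := by exact_mod_cast hG.degree_lt
  have hd' : (0 : ℝ) < d := by exact_mod_cast hd
  have ht' : (1 : ℝ) ≤ t := by exact_mod_cast ht
  have hr : ((d : ℝ) / (4 * n)) ^ (t - 2) ≤ 1 :=
    pow_le_one₀ (by positivity) ((div_le_one (by linarith)).2 (by linarith))
  have hq : (d : ℝ) / (20 * t) ≤ d / 20 :=
    div_le_div_of_nonneg_left hd'.le (by norm_num) (by linarith)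
  have hdeg : (d : ℝ) ≤ (G \ G').degree v + G'.degree v := by
    exact_mod_cast (by simpa [hG.1 v] using G.degree_le_degree_sdiff_add_degree G' v)
  have hS : ((G \ G').degree v : ℝ) - #W ≤ #((G \ G').neighborFinset v \ W) := by
    rw [← SimpleGraph.card_neighborFinset_eq_degree, sub_le_iff_le_add]
    exact_mod_cast card_le_card_sdiff_add_card
  nlinarith [hG' v, mul_le_mul_of_nonneg_right hr (by positivity : (0 : ℝ) ≤ d / (20 * t))]

end NDL

/-- Every vertex lies in a large family of copies of `K_t` in `G ∖ G'` that pairwise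
intersect exactly in that vertex. -/
theorem stmt10 (t : ℕ) (ht : 3 ≤ t) :
    ∃ n₀ : ℕ, ∀ n : ℕ, n₀ ≤ n →
      ∀ (d : ℕ) (G G' : SimpleGraph (Fin n)) [DecidableRel G.Adj] [DecidableRel G'.Adj]
        (lam : ℝ),
        NDL.IsNDL G d lam →
        lam ≤ (d : ℝ) ^ (t - 1) / (20 * (t : ℝ) * 4 ^ (t - 2) * (n : ℝ) ^ (t - 2)) →
        (∀ v, (G'.degree v : ℝ) ≤ ((d : ℝ) / (4 * n)) ^ (t - 2) * d / (20 * t)) →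
        ∀ v : Fin n, ∃ F : Finset (Finset (Fin n)),
          (d : ℝ) / (2 * (t : ℝ) - 2) ≤ F.card ∧
          (∀ T ∈ F, (G \ G').IsNClique t T ∧ v ∈ T) ∧
          (∀ T ∈ F, ∀ T' ∈ F, T ≠ T' → T ∩ T' = {v}) := by
  refine ⟨0, fun n _ d G G' _ _ lam hG hlam hG' v => ?_⟩
  have hlam' : lam ≤ ((d : ℝ) / (4 * n)) ^ (t - 2) * (d / (20 * t)) := by
    refine hlam.trans_eq ?_
    rw [show t - 1 = t - 2 + 1 by omega, pow_succ, div_pow, mul_pow]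
    ring
  have hG'' : ∀ w, (G'.degree w : ℝ) ≤ ((d : ℝ) / (4 * n)) ^ (t - 2) * (d / (20 * t)) :=
    fun w => (hG' w).trans_eq (mul_div_assoc _ _ _)
  have ht' : (3 : ℝ) ≤ t := by exact_mod_cast ht
  have hfree : ∀ k < ⌈(d : ℝ) / (2 * t - 2)⌉₊, ∀ W : Finset (Fin n), #W ≤ k * (t - 1 + 1) →
      ∃ K ⊆ (G \ G').neighborFinset v \ W, (G \ G').IsNClique (t - 1) K := by
    intro k hk W hW
    have hk' := Nat.lt_ceil.1 hk
    rw [lt_div_iff₀ (by linarith)] at hk'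
    have hd : (0 : ℝ) < d := by nlinarith [k.cast_nonneg (α := ℝ)]
    refine hG.exists_isNClique_sdiff_neighborFinset (Nat.cast_pos.1 hd) (by omega) hlam' hG'' v ?_
    rw [Nat.sub_add_cancel (by omega)] at hW
    calc (#W : ℝ) ≤ k * t := by exact_mod_cast hW
      _ ≤ 3 * d / 4 := by nlinarith [k.cast_nonneg (α := ℝ)]
  obtain ⟨F, hF, hsun⟩ := (G \ G').exists_isNCliqueSunflower_card_eq v (by omega) hfree
  rw [Nat.sub_add_cancel (by omega)] at hsun
  exact ⟨F, hF ▸ Nat.le_ceil _, hsun.1, hsun.2⟩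
end

section
/- Let G be an (n,d,λ)-graph and let U ⊆ V(G). Let X₂ = {v ∈ U : deg_U(v) ≤ d|U|/(2n)} be the set of vertices of U with at most d|U|/(2n) neighbors in U. Then |X₂| ≤ (2λn/d)²/|U|. -/
open Finset

/-!
Expander mixing: split `1_X = (|X|/n) • 1 + x'` with `x' ⊥ 1`. Since `1` spans the `d`-eigenspace
whenever `λ < d`, the vector `x'` only has components along eigenvectors whose eigenvalues are at
most `λ` in absolute value, so `|e(X, U) - d|X||U|/n| = |⟪x', A 1_U⟫| ≤ λ √(|X||U|)`.
For `X = X₂` we have `e(X, U) ≤ d|X||U|/(2n)`, hence `d √(|X||U|) / (2n) ≤ λ`.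
-/

open Matrix

namespace Matrix.IsHermitian

variable {ι : Type*} [Fintype ι] [DecidableEq ι] {A : Matrix ι ι ℝ} (hA : A.IsHermitian)

/-- The coordinates of `v` in the orthonormal eigenbasis `hA.eigenvectorBasis`. -/
noncomputable def eigenCoords (v : ι → ℝ) : ι → ℝ :=
  star (hA.eigenvectorUnitary : Matrix ι ι ℝ) *ᵥ v

lemma eigenCoords_dotProduct_eigenCoords (v w : ι → ℝ) :
    hA.eigenCoords v ⬝ᵥ hA.eigenCoords w = v ⬝ᵥ w := by
  have hP := mem_unitaryGroup_iff.mp hA.eigenvectorUnitary.2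
  rw [star_eq_conjTranspose, conjTranspose_eq_transpose_of_trivial] at hP
  rw [eigenCoords, eigenCoords, dotProduct_mulVec, star_eq_conjTranspose,
    conjTranspose_eq_transpose_of_trivial, vecMul_transpose, mulVec_mulVec, hP, one_mulVec]

lemma eigenCoords_mulVec (v : ι → ℝ) (i : ι) :
    hA.eigenCoords (A *ᵥ v) i = hA.eigenvalues i * hA.eigenCoords v i := by
  have hPA : star (hA.eigenvectorUnitary : Matrix ι ι ℝ) * A =
      diagonal hA.eigenvalues * star (hA.eigenvectorUnitary : Matrix ι ι ℝ) := by
    have hP := mem_unitaryGroup_iff'.mp hA.eigenvectorUnitary.2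
    conv_lhs => arg 2; rw [hA.spectral_theorem, Unitary.conjStarAlgAut_apply]
    simp [← mul_assoc, hP]
  rw [eigenCoords, eigenCoords, mulVec_mulVec, hPA, ← mulVec_mulVec, mulVec_diagonal]

lemma dotProduct_mulVec_eq_sum (v w : ι → ℝ) :
    v ⬝ᵥ A *ᵥ w = ∑ i, hA.eigenvalues i * (hA.eigenCoords v i * hA.eigenCoords w i) := by
  rw [← eigenCoords_dotProduct_eigenCoords hA, dotProduct]
  exact sum_congr rfl fun i _ => by rw [eigenCoords_mulVec]; ring

lemma abs_dotProduct_mulVec_le {lam : ℝ} (hlam : 0 ≤ lam) {v : ι → ℝ}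
    (hv : ∀ i, |hA.eigenvalues i| ≤ lam ∨ hA.eigenCoords v i = 0) (w : ι → ℝ) :
    |v ⬝ᵥ A *ᵥ w| ≤ lam * (√(v ⬝ᵥ v) * √(w ⬝ᵥ w)) := by
  have hnorm (u : ι → ℝ) : √(u ⬝ᵥ u) = √(∑ i, |hA.eigenCoords u i| ^ 2) := by
    rw [← eigenCoords_dotProduct_eigenCoords hA u u]
    simp_rw [sq_abs, sq]
    rfl
  calc |v ⬝ᵥ A *ᵥ w|
      ≤ ∑ i, |hA.eigenvalues i| * (|hA.eigenCoords v i| * |hA.eigenCoords w i|) := by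
        simp only [dotProduct_mulVec_eq_sum hA, ← abs_mul]; exact abs_sum_le_sum_abs _ _
    _ ≤ ∑ i, lam * (|hA.eigenCoords v i| * |hA.eigenCoords w i|) := by
        refine sum_le_sum fun i _ => ?_
        rcases hv i with h | h
        · exact mul_le_mul_of_nonneg_right h (by positivity)
        · simp [h]
    _ = lam * ∑ i, |hA.eigenCoords v i| * |hA.eigenCoords w i| := by rw [mul_sum]
    _ ≤ lam * (√(v ⬝ᵥ v) * √(w ⬝ᵥ w)) := by
        rw [hnorm, hnorm]
        exact mul_le_mul_of_nonneg_left (Real.sum_mul_le_sqrt_mul_sqrt _ _ _) hlam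

lemma eigenCoords_eq_zero_of_dotProduct_eq_zero {u : ι → ℝ} {c : ℝ} (hu : A *ᵥ u = c • u)
    (hu0 : u ≠ 0) {i₀ : ι} (hsimple : ∀ i ≠ i₀, hA.eigenvalues i ≠ c) {v : ι → ℝ}
    (huv : u ⬝ᵥ v = 0) : hA.eigenCoords v i₀ = 0 := by
  have hu_single : hA.eigenCoords u = Pi.single i₀ (hA.eigenCoords u i₀) := by
    ext i
    rcases eq_or_ne i i₀ with rfl | hi
    · simp
    · have h := eigenCoords_mulVec hA u i
      simp only [hu, eigenCoords, mulVec_smul, Pi.smul_apply, smul_eq_mul] at h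
      have : (hA.eigenvalues i - c) * hA.eigenCoords u i = 0 := by
        rw [sub_mul, eigenCoords]; linarith
      rw [Pi.single_eq_of_ne hi]
      exact (mul_eq_zero.mp this).resolve_left (sub_ne_zero.mpr (hsimple i hi))
  have hu₀ : hA.eigenCoords u i₀ ≠ 0 := by
    intro h
    apply hu0
    rw [← dotProduct_self_eq_zero, ← eigenCoords_dotProduct_eigenCoords hA, hu_single, h]
    simp
  have : hA.eigenCoords u i₀ * hA.eigenCoords v i₀ = 0 := by
    rw [← huv, ← eigenCoords_dotProduct_eigenCoords hA, hu_single]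
    simp
  exact (mul_eq_zero.mp this).resolve_left hu₀

theorem abs_dotProduct_mulVec_sub_le {d lam : ℝ} (hlam : 0 ≤ lam) (hone : A *ᵥ 1 = d • 1)
    {i₀ : ι} (hi₀ : hA.eigenvalues i₀ = d) (hbound : ∀ i ≠ i₀, |hA.eigenvalues i| ≤ lam)
    (x y : ι → ℝ) :
    |x ⬝ᵥ A *ᵥ y - d * (∑ i, x i) * (∑ i, y i) / Fintype.card ι| ≤
      lam * (√(x ⬝ᵥ x) * √(y ⬝ᵥ y)) := by
  have : Nonempty ι := ⟨i₀⟩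
  have hn : (Fintype.card ι : ℝ) ≠ 0 := Nat.cast_ne_zero.mpr Fintype.card_ne_zero
  have hone_one : (1 : ι → ℝ) ⬝ᵥ 1 = Fintype.card ι := by simp
  set x' := x - ((∑ i, x i) / Fintype.card ι) • (1 : ι → ℝ)
  have hone_left : (1 : ι → ℝ) ⬝ᵥ A *ᵥ y = d * ∑ i, y i := by
    rw [dotProduct_mulVec, ← mulVec_transpose, ← conjTranspose_eq_transpose_of_trivial, hA.eq,
      hone, smul_dotProduct, one_dotProduct, smul_eq_mul]
  have hcenter : x' ⬝ᵥ A *ᵥ y = x ⬝ᵥ A *ᵥ y - d * (∑ i, x i) * (∑ i, y i) / Fintype.card ι := by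
    rw [sub_dotProduct, smul_dotProduct, hone_left, smul_eq_mul]
    ring
  have hx'_orth : (1 : ι → ℝ) ⬝ᵥ x' = 0 := by
    rw [dotProduct_sub, dotProduct_smul, hone_one, one_dotProduct, smul_eq_mul]
    field_simp
    ring
  have hx'_sq : x' ⬝ᵥ x' ≤ x ⬝ᵥ x := by
    have : x' ⬝ᵥ x' = x ⬝ᵥ x - (∑ i, x i) ^ 2 / Fintype.card ι := by
      nth_rw 2 [show x' = x - ((∑ i, x i) / Fintype.card ι) • (1 : ι → ℝ) from rfl]
      rw [dotProduct_sub, dotProduct_smul, dotProduct_comm x' 1, hx'_orth, smul_zero, sub_zero,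
        sub_dotProduct, smul_dotProduct, one_dotProduct, smul_eq_mul]
      ring
    rw [this]
    exact sub_le_self _ (by positivity)
  have hx'_coords : ∀ i, |hA.eigenvalues i| ≤ lam ∨ hA.eigenCoords x' i = 0 := by
    intro i
    by_cases hi : i ≠ i₀
    · exact Or.inl (hbound i hi)
    rw [not_not.mp hi]
    by_cases hd : |d| ≤ lam
    · exact Or.inl (hi₀ ▸ hd)
    -- `d` is then a simple eigenvalue, so `x' ⊥ 1` has no component along its eigenvector
    refine Or.inr (eigenCoords_eq_zero_of_dotProduct_eq_zero hA hone ?_ ?_ hx'_orth)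
    · exact Function.ne_iff.mpr ⟨i₀, one_ne_zero⟩
    · intro j hj hjd
      exact hd (hjd ▸ hbound j hj)
  calc _ = |x' ⬝ᵥ A *ᵥ y| := by rw [hcenter]
    _ ≤ lam * (√(x' ⬝ᵥ x') * √(y ⬝ᵥ y)) := abs_dotProduct_mulVec_le hA hlam hx'_coords y
    _ ≤ lam * (√(x ⬝ᵥ x) * √(y ⬝ᵥ y)) := by gcongr

end Matrix.IsHermitian

namespace NDL

variable {n d : ℕ} {G : SimpleGraph (Fin n)} [DecidableRel G.Adj] {lam : ℝ}

lemma IsNDL.lam_nonneg (hG : IsNDL G d lam) (hd : 0 < d) : 0 ≤ lam := by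
  obtain ⟨hreg, hA, i₀, -, hbound⟩ := hG
  have hdn : d < n := by simpa [hreg i₀] using G.degree_lt_card_verts i₀
  have : Nontrivial (Fin n) := Fin.nontrivial_iff_two_le.mpr (by omega)
  obtain ⟨j, hj⟩ := exists_ne i₀
  exact (abs_nonneg _).trans (hbound j hj)

theorem IsNDL.abs_sum_card_neighborFinset_inter_sub_le (hG : IsNDL G d lam) (hlam : 0 ≤ lam)
    (X U : Finset (Fin n)) :
    |∑ a ∈ X, ((G.neighborFinset a ∩ U).card : ℝ) - d * X.card * U.card / n| ≤
      lam * √(X.card * U.card) := by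
  obtain ⟨hreg, hA, i₀, hi₀, hbound⟩ := hG
  have hone : G.adjMatrix ℝ *ᵥ 1 = (d : ℝ) • 1 := by
    ext v; simp [SimpleGraph.adjMatrix_mulVec_apply, hreg v]
  have h := hA.abs_dotProduct_mulVec_sub_le hlam hone hi₀ hbound
    (fun v => if v ∈ X then 1 else 0) (fun v => if v ∈ U then 1 else 0)
  simpa [dotProduct, SimpleGraph.adjMatrix_mulVec_apply, Real.sqrt_mul] using h

end NDL

/-- Vertices of `U` with at most `d|U|/(2n)` neighbours in `U` are few. -/
theorem stmt16 {n d : ℕ} (G : SimpleGraph (Fin n)) [DecidableRel G.Adj] (lam : ℝ)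
    (hG : NDL.IsNDL G d lam) (hd : 0 < d) (U : Finset (Fin n)) :
    (((U.filter fun v =>
        ((G.neighborFinset v ∩ U).card : ℝ) ≤ (d : ℝ) * U.card / (2 * n)).card : ℝ)) ≤
      (2 * lam * n / d) ^ 2 / U.card := by
  set X := U.filter fun v => ((G.neighborFinset v ∩ U).card : ℝ) ≤ (d : ℝ) * U.card / (2 * n)
  rcases U.eq_empty_or_nonempty with rfl | hU
  · simp [X]
  have hn : (0 : ℝ) < n := by exact_mod_cast hU.choose.pos
  have hUpos : (0 : ℝ) < U.card := by exact_mod_cast hU.card_pos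
  have hmix := (abs_le.mp (hG.abs_sum_card_neighborFinset_inter_sub_le (hG.lam_nonneg hd) X U)).1
  have hsum : ∑ a ∈ X, ((G.neighborFinset a ∩ U).card : ℝ) ≤ X.card * (d * U.card / (2 * n)) := by
    simpa using sum_le_card_nsmul X _ _ fun a ha => (mem_filter.mp ha).2
  set t := √(X.card * U.card : ℝ)
  have ht : t ^ 2 = X.card * U.card := Real.sq_sqrt (by positivity)
  have hXU : (d : ℝ) * X.card * U.card / (2 * n) ≤ lam * t := by
    have : (d : ℝ) * X.card * U.card / n = 2 * (d * X.card * U.card / (2 * n)) := by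
      field_simp
    linarith [show (X.card : ℝ) * (d * U.card / (2 * n)) = d * X.card * U.card / (2 * n) by ring]
  have ht_le : t ^ 2 ≤ (2 * lam * n / d) * t := by
    rw [div_le_iff₀ (by positivity)] at hXU
    rw [div_mul_eq_mul_div, le_div_iff₀ (by positivity)]
    nlinarith
  rw [le_div_iff₀ hUpos, ← ht]
  nlinarith [sq_nonneg (2 * lam * n / d - t)]
end
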